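/- Let p₁, p₂, p₃ ∈ C^∞(ℝ⁴,ℝ) satisfy assumptions (A1) and (A2), set ∂ = p₁σ₁ + p₂σ₂ + p₃σ₃, λ_∂ = ({p₁,p₂}² + {p₂,p₃}² + {p₃,p₁}²)^{1/4}, and, on the open set where λ_∂ ≠ 0, define the vector field V_∂ = −({p₂,p₃}H_{p₁} + {p₃,p₁}H_{p₂} + {p₁,p₂}H_{p₃})/λ_∂². Suppose κ is a symplectomorphism from a neighborhood of 0 in ℝ⁴ into ℝ⁴ with κ(0) ∈ Γ, λ : ℝ → (0,∞) and μ : ℝ → ℝ are smooth, U : ℝ⁴ → SU(2) is smooth, and every entry of U(x,ξ)·∂(κ(x,ξ))·U(x,ξ)* − (λ(x₁) + μ(x₁)ξ₁)·𝔡₀(x,ξ) is 𝒪(3) on a neighborhood of 0. Then for all x₁ in a neighborhood of 0 the point κ(x₁,0,0,0) belongs to Γ, and λ_∂(κ(x₁,0,0,0)) = λ(x₁) and V_∂(κ(x₁,0,0,0)) = Dκ(x₁,0,0,0)·(λ(x₁),0,0,0). -/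

import Mathlib

open Matrix Complex

noncomputable section

def pauli1 : Matrix (Fin 2) (Fin 2) ℂ := !![0, 1; 1, 0]
def pauli2 : Matrix (Fin 2) (Fin 2) ℂ := !![0, -I; I, 0]
def pauli3 : Matrix (Fin 2) (Fin 2) ℂ := !![1, 0; 0, -1]

def MemSU2 (U : Matrix (Fin 2) (Fin 2) ℂ) : Prop :=
  Uᴴ * U = 1 ∧ U.det = 1

def omega4 (u v : Fin 4 → ℝ) : ℝ :=
  u 2 * v 0 + u 3 * v 1 - u 0 * v 2 - u 1 * v 3

/-- Poisson bracket on `ℝ⁴`, coordinates `(x₁,x₂,ξ₁,ξ₂) = (z 0, z 1, z 2, z 3)`. -/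
def pb (f g : (Fin 4 → ℝ) → ℝ) (z : Fin 4 → ℝ) : ℝ :=
  fderiv ℝ f z (Pi.single 2 1) * fderiv ℝ g z (Pi.single 0 1)
  + fderiv ℝ f z (Pi.single 3 1) * fderiv ℝ g z (Pi.single 1 1)
  - fderiv ℝ f z (Pi.single 0 1) * fderiv ℝ g z (Pi.single 2 1)
  - fderiv ℝ f z (Pi.single 1 1) * fderiv ℝ g z (Pi.single 3 1)

/-- The Hamiltonian vector field `H_f = (∂f/∂ξ₁, ∂f/∂ξ₂, −∂f/∂x₁, −∂f/∂x₂)`. -/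
def hamVF (f : (Fin 4 → ℝ) → ℝ) (z : Fin 4 → ℝ) : Fin 4 → ℝ :=
  ![fderiv ℝ f z (Pi.single 2 1), fderiv ℝ f z (Pi.single 3 1),
    -fderiv ℝ f z (Pi.single 0 1), -fderiv ℝ f z (Pi.single 1 1)]

def lamPartial (p₁ p₂ p₃ : (Fin 4 → ℝ) → ℝ) (z : Fin 4 → ℝ) : ℝ :=
  ((pb p₁ p₂ z) ^ 2 + (pb p₂ p₃ z) ^ 2 + (pb p₃ p₁ z) ^ 2) ^ ((1 : ℝ) / 4)

/-- `V_∂ = −({p₂,p₃}H_{p₁} + {p₃,p₁}H_{p₂} + {p₁,p₂}H_{p₃})/λ_∂²`. -/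
def Vpartial (p₁ p₂ p₃ : (Fin 4 → ℝ) → ℝ) (z : Fin 4 → ℝ) : Fin 4 → ℝ :=
  -((lamPartial p₁ p₂ p₃ z) ^ 2)⁻¹ •
    (pb p₂ p₃ z • hamVF p₁ z + pb p₃ p₁ z • hamVF p₂ z + pb p₁ p₂ z • hamVF p₃ z)

def Gam (p₁ p₂ p₃ : (Fin 4 → ℝ) → ℝ) : Set (Fin 4 → ℝ) :=
  {z | p₁ z = 0 ∧ p₂ z = 0 ∧ p₃ z = 0}

def pi4 (z : Fin 4 → ℝ) : Fin 2 → ℝ := ![z 0, z 1]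

def A1 (p₁ p₂ p₃ : (Fin 4 → ℝ) → ℝ) : Prop :=
  ∀ z ∈ Gam p₁ p₂ p₃,
    LinearIndependent ℝ ![fderiv ℝ p₁ z, fderiv ℝ p₂ z, fderiv ℝ p₃ z]

def IsEmbeddedCurve (C : Set (Fin 2 → ℝ)) : Prop :=
  ∀ p ∈ C, ∃ (V : Set (Fin 2 → ℝ)) (Φ Ψ : (Fin 2 → ℝ) → (Fin 2 → ℝ)),
    IsOpen V ∧ p ∈ V ∧ ContDiffOn ℝ (⊤ : ℕ∞) Φ V ∧ Set.InjOn Φ V ∧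
    IsOpen (Φ '' V) ∧ ContDiffOn ℝ (⊤ : ℕ∞) Ψ (Φ '' V) ∧
    (∀ x ∈ V, Ψ (Φ x) = x) ∧
    Φ '' (V ∩ C) = (Φ '' V) ∩ {y | y 1 = 0}

def A2 (p₁ p₂ p₃ : (Fin 4 → ℝ) → ℝ) : Prop :=
  IsEmbeddedCurve (pi4 '' Gam p₁ p₂ p₃)

def IsBigOC (n : ℕ) (U : Set (Fin 4 → ℝ)) (f : (Fin 4 → ℝ) → ℂ) : Prop :=
  ∃ r : ℕ × ℕ × ℕ → (Fin 4 → ℝ) → ℂ,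
    (∀ m, ContDiffOn ℝ (⊤ : ℕ∞) (r m) U) ∧
    ∀ z ∈ U, f z =
      ∑ m ∈ (Finset.range (n+1) ×ˢ Finset.range (n+1) ×ˢ Finset.range (n+1)).filter
          (fun m : ℕ × ℕ × ℕ => m.1 + m.2.1 + m.2.2 = n),
        (z 1 : ℂ) ^ m.1 * (z 2 : ℂ) ^ m.2.1 * (z 3 : ℂ) ^ m.2.2 * r m z

def diracSymbol (p₁ p₂ p₃ : (Fin 4 → ℝ) → ℝ) (z : Fin 4 → ℝ) :
    Matrix (Fin 2) (Fin 2) ℂ :=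
  (p₁ z : ℂ) • pauli1 + (p₂ z : ℂ) • pauli2 + (p₃ z : ℂ) • pauli3

def d0 (z : Fin 4 → ℝ) : Matrix (Fin 2) (Fin 2) ℂ :=
  !![(z 2 : ℝ), (z 1 : ℝ) - I * (z 3 : ℝ);
     (z 1 : ℝ) + I * (z 3 : ℝ), -(z 2 : ℝ)]

/-!
Put `q = p ∘ κ` and `z₀ = (x₁, 0, 0, 0)`. An `𝒪(3)` remainder vanishes at `z₀` together with its
first derivatives, so `U ∂(κ z) U*` agrees with `λ(x₁) 𝔡₀` to first order at `z₀`. Hence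
`∂(κ z₀) = 0`, and the differentials of `q₁, q₂, q₃` at `z₀` are `λ(x₁) R (dx₂, dξ₂, dξ₁)`, where
`R ∈ SO(3)` is the rotation by which `U(z₀)` acts on Pauli coefficients. Poisson brackets of
differentials are cross products, so `({q₂,q₃}, {q₃,q₁}, {q₁,q₂}) = -λ(x₁)² R e₃` at `z₀`, which gives
`λ_q(z₀) = λ(x₁)` and `V_q(z₀) = (λ(x₁), 0, 0, 0)`. Finally, `λ_∂` and `V_∂` are invariant under the
symplectomorphism `κ`: it preserves Poisson brackets, and `Dκ` maps `H_{p ∘ κ}` to `H_p`.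
-/

open Asymptotics Filter Topology

section Calculus

variable {E : Type*} [NormedAddCommGroup E] [NormedSpace ℝ E]

theorem hasFDerivAt_of_sub_mul_isBigO {M c : E → ℂ} {L : E →L[ℝ] ℂ} {z₀ : E} {n : ℕ}
    (hc : DifferentiableAt ℝ c z₀) (hL : L z₀ = 0)
    (hM : (fun z => M z - c z * L z) =O[𝓝 z₀] fun z => ‖z - z₀‖ ^ n) (hn : 1 < n) :
    M z₀ = 0 ∧ HasFDerivAt M (c z₀ • L) z₀ := by
  constructor
  · simpa [hL] using hM.eq_zero_of_norm_pow (by omega)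
  · have h := (hc.hasFDerivAt.mul L.hasFDerivAt).add (hM.hasFDerivAt hn)
    refine (h.congr_fderiv (by ext v; simp [hL])).congr_of_eventuallyEq
      (Eventually.of_forall fun z => ?_)
    simp only [Pi.add_apply, Pi.mul_apply]
    ring

theorem hasFDerivAt_mul_mul_apply_of_eq_zero {ι 𝔸 : Type*} [Fintype ι] [NormedCommRing 𝔸]
    [NormedAlgebra ℝ 𝔸] {A M B : E → Matrix ι ι 𝔸} {M' : Matrix ι ι (E →L[ℝ] 𝔸)} {z₀ : E}
    (hA : ∀ i j, DifferentiableAt ℝ (fun z => A z i j) z₀)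
    (hM : ∀ i j, HasFDerivAt (fun z => M z i j) (M' i j) z₀)
    (hB : ∀ i j, DifferentiableAt ℝ (fun z => B z i j) z₀) (hM₀ : M z₀ = 0) (a b : ι) :
    HasFDerivAt (fun z => (A z * M z * B z) a b)
      (∑ i, ∑ j, (A z₀ a i * B z₀ j b) • M' i j) z₀ := by
  simp only [Matrix.mul_apply, Finset.sum_mul]
  rw [Finset.sum_comm]
  refine HasFDerivAt.fun_sum fun j _ => HasFDerivAt.fun_sum fun i _ => ?_
  have h := ((hA a i).hasFDerivAt.fun_mul (hM i j)).fun_mul (hB j b).hasFDerivAt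
  refine h.congr_fderiv ?_
  have h0 : M z₀ i j = 0 := by simp [hM₀]
  ext v
  simp [h0]
  ring

end Calculus

theorem MemSU2.eq_fin_two {U : Matrix (Fin 2) (Fin 2) ℂ} (hU : MemSU2 U) :
    U = !![U 0 0, U 0 1; -star (U 0 1), star (U 0 0)] := by
  obtain ⟨hUU, hdet⟩ := hU
  have hadj : Uᴴ = U.adjugate := by
    rw [← Matrix.inv_eq_left_inv hUU, Matrix.inv_def, hdet, Ring.inverse_one, one_smul]
  have h := congr_arg Matrix.conjTranspose hadj
  rw [Matrix.conjTranspose_conjTranspose, Matrix.adjugate_fin_two] at h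
  have h10 : U 1 0 = -star (U 0 1) := by simpa using congr_fun (congr_fun h 1) 0
  have h11 : U 1 1 = star (U 0 0) := by simpa using congr_fun (congr_fun h 1) 1
  ext i j; fin_cases i <;> fin_cases j <;> simp [h10, h11]

theorem MemSU2.normSq_add_normSq {U : Matrix (Fin 2) (Fin 2) ℂ} (hU : MemSU2 U) :
    normSq (U 0 0) + normSq (U 0 1) = 1 := by
  have h := hU.2
  rw [hU.eq_fin_two, Matrix.det_fin_two_of] at h
  have := congr_arg Complex.re h
  simp [normSq_apply, Complex.mul_re] at this ⊢
  linarith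

-- Coefficients of a traceless Hermitian matrix in the Pauli basis `σ₁, σ₂, σ₃`.
def pauliCoeffs (S : Matrix (Fin 2) (Fin 2) ℂ) : Fin 3 → ℝ :=
  ![(S 1 0).re, (S 1 0).im, (S 0 0).re]

theorem pauliCoeffs_diracSymbol (p₁ p₂ p₃ : (Fin 4 → ℝ) → ℝ) (z : Fin 4 → ℝ) :
    pauliCoeffs (diracSymbol p₁ p₂ p₃ z) = ![p₁ z, p₂ z, p₃ z] := by
  ext k; fin_cases k <;> simp [pauliCoeffs, diracSymbol, pauli1, pauli2, pauli3]

theorem pauliCoeffs_ofReal_smul (r : ℝ) (S : Matrix (Fin 2) (Fin 2) ℂ) :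
    pauliCoeffs ((r : ℂ) • S) = r • pauliCoeffs S := by
  ext k; fin_cases k <;> simp [pauliCoeffs]

theorem mem_Gam_of_diracSymbol_eq_zero {p₁ p₂ p₃ : (Fin 4 → ℝ) → ℝ} {w : Fin 4 → ℝ}
    (h : diracSymbol p₁ p₂ p₃ w = 0) : w ∈ Gam p₁ p₂ p₃ := by
  have hc := pauliCoeffs_diracSymbol p₁ p₂ p₃ w
  rw [h] at hc
  have hc₀ := congr_fun hc 0
  have hc₁ := congr_fun hc 1
  have hc₂ := congr_fun hc 2
  simp [pauliCoeffs] at hc₀ hc₁ hc₂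
  exact ⟨hc₀.symm, hc₁.symm, hc₂.symm⟩

-- Conjugation by `U` rotates Pauli coefficients: the covering `SU(2) → SO(3)`.
theorem MemSU2.pauliCoeffs_conj_cross {U : Matrix (Fin 2) (Fin 2) ℂ} (hU : MemSU2 U) :
    pauliCoeffs (Uᴴ * pauli1 * U) ⨯₃ pauliCoeffs (Uᴴ * pauli2 * U) =
      pauliCoeffs (Uᴴ * pauli3 * U) := by
  rw [← one_smul ℝ (pauliCoeffs (Uᴴ * pauli3 * U)), ← hU.normSq_add_normSq, hU.eq_fin_two]
  ext k; fin_cases k <;>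
    simp [pauliCoeffs, pauli1, pauli2, pauli3, cross_apply, Matrix.mul_apply, normSq_apply] <;>
    ring

theorem MemSU2.pauliCoeffs_conj_dotProduct_self {U : Matrix (Fin 2) (Fin 2) ℂ} (hU : MemSU2 U) :
    pauliCoeffs (Uᴴ * pauli3 * U) ⬝ᵥ pauliCoeffs (Uᴴ * pauli3 * U) = 1 := by
  rw [← one_pow 2, ← hU.normSq_add_normSq, hU.eq_fin_two]
  simp [pauliCoeffs, pauli3, dotProduct, Fin.sum_univ_three, Matrix.mul_apply, normSq_apply]
  ring

def pbVec (p₁ p₂ p₃ : (Fin 4 → ℝ) → ℝ) (z : Fin 4 → ℝ) : Fin 3 → ℝ :=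
  ![pb p₂ p₃ z, pb p₃ p₁ z, pb p₁ p₂ z]

def partialDerivs (p₁ p₂ p₃ : (Fin 4 → ℝ) → ℝ) (z : Fin 4 → ℝ) (m : Fin 4) : Fin 3 → ℝ :=
  ![fderiv ℝ p₁ z (Pi.single m 1), fderiv ℝ p₂ z (Pi.single m 1), fderiv ℝ p₃ z (Pi.single m 1)]

section PoissonAlgebra

variable (p₁ p₂ p₃ : (Fin 4 → ℝ) → ℝ) (z : Fin 4 → ℝ)

-- `ω` is the sum of the area forms of the planes `(x₁, ξ₁)` and `(x₂, ξ₂)`.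
theorem pbVec_eq_cross :
    pbVec p₁ p₂ p₃ z = partialDerivs p₁ p₂ p₃ z 2 ⨯₃ partialDerivs p₁ p₂ p₃ z 0 +
      partialDerivs p₁ p₂ p₃ z 3 ⨯₃ partialDerivs p₁ p₂ p₃ z 1 := by
  ext k; fin_cases k <;> simp [pbVec, partialDerivs, pb, cross_apply] <;> ring

theorem lamPartial_eq_dotProduct :
    lamPartial p₁ p₂ p₃ z = (pbVec p₁ p₂ p₃ z ⬝ᵥ pbVec p₁ p₂ p₃ z) ^ ((1 : ℝ) / 4) := by
  simp only [lamPartial, pbVec, dotProduct, Fin.sum_univ_three]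
  congr 1
  simp only [Matrix.cons_val]
  ring

theorem Vpartial_eq_dotProduct :
    Vpartial p₁ p₂ p₃ z = -((lamPartial p₁ p₂ p₃ z) ^ 2)⁻¹ •
      ![pbVec p₁ p₂ p₃ z ⬝ᵥ partialDerivs p₁ p₂ p₃ z 2,
        pbVec p₁ p₂ p₃ z ⬝ᵥ partialDerivs p₁ p₂ p₃ z 3,
        -(pbVec p₁ p₂ p₃ z ⬝ᵥ partialDerivs p₁ p₂ p₃ z 0),
        -(pbVec p₁ p₂ p₃ z ⬝ᵥ partialDerivs p₁ p₂ p₃ z 1)] := by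
  rw [Vpartial]
  congr 1
  ext k; fin_cases k <;>
    simp [pbVec, partialDerivs, hamVF, dotProduct, Fin.sum_univ_three] <;> ring

theorem lamPartial_Vpartial_of_partialDerivs {l : ℝ} (hl : 0 < l) {r₁ r₂ r₃ : Fin 3 → ℝ}
    (hcross : r₁ ⨯₃ r₂ = r₃) (hr₃ : r₃ ⬝ᵥ r₃ = 1)
    (h₀ : partialDerivs p₁ p₂ p₃ z 0 = 0) (h₁ : partialDerivs p₁ p₂ p₃ z 1 = l • r₁)
    (h₂ : partialDerivs p₁ p₂ p₃ z 2 = l • r₃) (h₃ : partialDerivs p₁ p₂ p₃ z 3 = l • r₂) :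
    lamPartial p₁ p₂ p₃ z = l ∧ Vpartial p₁ p₂ p₃ z = ![l, 0, 0, 0] := by
  have hb : pbVec p₁ p₂ p₃ z = -(l ^ 2) • r₃ := by
    rw [pbVec_eq_cross, h₀, h₁, h₃]
    simp only [map_smul, LinearMap.smul_apply, map_zero, zero_add]
    rw [← cross_anticomm, hcross]
    module
  have hlam : lamPartial p₁ p₂ p₃ z = l := by
    have hb4 : pbVec p₁ p₂ p₃ z ⬝ᵥ pbVec p₁ p₂ p₃ z = l ^ 4 := by
      rw [hb, smul_dotProduct, dotProduct_smul, hr₃, smul_eq_mul, smul_eq_mul]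
      ring
    rw [lamPartial_eq_dotProduct, hb4, one_div]
    exact_mod_cast Real.pow_rpow_inv_natCast hl.le (by norm_num : (4 : ℕ) ≠ 0)
  refine ⟨hlam, ?_⟩
  rw [Vpartial_eq_dotProduct, hlam, hb, h₀, h₁, h₂, h₃]
  have hr₃₁ : r₃ ⬝ᵥ r₁ = 0 := by rw [dotProduct_comm, ← hcross, dot_self_cross]
  have hr₃₂ : r₃ ⬝ᵥ r₂ = 0 := by rw [dotProduct_comm, ← hcross, dot_cross_self]
  ext k; fin_cases k <;> simp [hr₃, hr₃₁, hr₃₂]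
  field_simp

end PoissonAlgebra

theorem pi_apply_eq_sum_single {ι : Type*} [Fintype ι] [DecidableEq ι]
    (L : (ι → ℝ) →L[ℝ] ℝ) (v : ι → ℝ) : L v = ∑ i, v i * L (Pi.single i 1) := by
  conv_lhs => rw [← Finset.univ_sum_single v]
  simp_rw [map_sum, ← smul_eq_mul, ← map_smul, ← Pi.single_smul', smul_eq_mul, mul_one]

theorem omega4_hamVF (f : (Fin 4 → ℝ) → ℝ) (z v : Fin 4 → ℝ) :
    omega4 (hamVF f z) v = -fderiv ℝ f z v := by
  rw [pi_apply_eq_sum_single]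
  simp [omega4, hamVF, Fin.sum_univ_four]
  ring

theorem pb_eq_fderiv_hamVF (f g : (Fin 4 → ℝ) → ℝ) (z : Fin 4 → ℝ) :
    pb f g z = fderiv ℝ g z (hamVF f z) := by
  rw [pi_apply_eq_sum_single]
  simp [pb, hamVF, Fin.sum_univ_four]
  ring

theorem eq_of_forall_omega4_eq {a b : Fin 4 → ℝ} (h : ∀ v, omega4 a v = omega4 b v) : a = b := by
  have h₀ := h (Pi.single 2 1)
  have h₁ := h (Pi.single 3 1)
  have h₂ := h (Pi.single 0 1)
  have h₃ := h (Pi.single 1 1)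
  simp [omega4] at h₀ h₁ h₂ h₃
  ext i; fin_cases i <;> simp [*]

theorem surjective_of_omega4_map {L : (Fin 4 → ℝ) →L[ℝ] (Fin 4 → ℝ)}
    (hL : ∀ u v, omega4 (L u) (L v) = omega4 u v) : Function.Surjective L :=
  LinearMap.injective_iff_surjective.mp fun u v (huv : L u = L v) =>
    eq_of_forall_omega4_eq fun w => by rw [← hL, huv, hL]

section SymplecticInvariance

variable {κ : (Fin 4 → ℝ) → (Fin 4 → ℝ)} {z : Fin 4 → ℝ} (hκ : DifferentiableAt ℝ κ z)
  (hsymp : ∀ u v, omega4 (fderiv ℝ κ z u) (fderiv ℝ κ z v) = omega4 u v)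
include hκ hsymp

theorem hamVF_comp {p : (Fin 4 → ℝ) → ℝ} (hp : DifferentiableAt ℝ p (κ z)) :
    fderiv ℝ κ z (hamVF (p ∘ κ) z) = hamVF p (κ z) := by
  refine eq_of_forall_omega4_eq fun w => ?_
  obtain ⟨w, rfl⟩ := surjective_of_omega4_map hsymp w
  rw [hsymp, omega4_hamVF, omega4_hamVF, fderiv_comp z hp hκ]
  rfl

theorem pb_comp {p q : (Fin 4 → ℝ) → ℝ} (hp : DifferentiableAt ℝ p (κ z))
    (hq : DifferentiableAt ℝ q (κ z)) : pb (p ∘ κ) (q ∘ κ) z = pb p q (κ z) := by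
  rw [pb_eq_fderiv_hamVF, pb_eq_fderiv_hamVF, ← hamVF_comp hκ hsymp hp, fderiv_comp z hq hκ]
  rfl

variable {p₁ p₂ p₃ : (Fin 4 → ℝ) → ℝ} (hp₁ : DifferentiableAt ℝ p₁ (κ z))
  (hp₂ : DifferentiableAt ℝ p₂ (κ z)) (hp₃ : DifferentiableAt ℝ p₃ (κ z))
include hp₁ hp₂ hp₃

theorem lamPartial_comp : lamPartial (p₁ ∘ κ) (p₂ ∘ κ) (p₃ ∘ κ) z = lamPartial p₁ p₂ p₃ (κ z) := by
  simp only [lamPartial, pb_comp hκ hsymp hp₁ hp₂, pb_comp hκ hsymp hp₂ hp₃,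
    pb_comp hκ hsymp hp₃ hp₁]

theorem Vpartial_comp :
    fderiv ℝ κ z (Vpartial (p₁ ∘ κ) (p₂ ∘ κ) (p₃ ∘ κ) z) = Vpartial p₁ p₂ p₃ (κ z) := by
  simp only [Vpartial, lamPartial_comp hκ hsymp hp₁ hp₂ hp₃, map_smul, map_add,
    hamVF_comp hκ hsymp hp₁, hamVF_comp hκ hsymp hp₂, hamVF_comp hκ hsymp hp₃,
    pb_comp hκ hsymp hp₁ hp₂, pb_comp hκ hsymp hp₂ hp₃, pb_comp hκ hsymp hp₃ hp₁]

end SymplecticInvariance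

theorem isBigO_coord_of_eq_zero {z₀ : Fin 4 → ℝ} {i : Fin 4} (hi : z₀ i = 0) :
    (fun z : Fin 4 → ℝ => ((z i : ℝ) : ℂ)) =O[𝓝 z₀] fun z => ‖z - z₀‖ := by
  refine IsBigO.of_bound 1 (Eventually.of_forall fun z => ?_)
  simpa [hi] using norm_le_pi_norm (z - z₀) i

theorem IsBigOC.isBigO {n : ℕ} {V : Set (Fin 4 → ℝ)} {f : (Fin 4 → ℝ) → ℂ}
    (hf : IsBigOC n V f) (hV : IsOpen V) {z₀ : Fin 4 → ℝ} (hz₀ : z₀ ∈ V)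
    (h₁ : z₀ 1 = 0) (h₂ : z₀ 2 = 0) (h₃ : z₀ 3 = 0) :
    f =O[𝓝 z₀] fun z => ‖z - z₀‖ ^ n := by
  obtain ⟨r, hr, hfr⟩ := hf
  refine (IsBigO.fun_sum fun m hm => ?_).congr'
    (EventuallyEq.symm (eventually_of_mem (hV.mem_nhds hz₀) hfr)) EventuallyEq.rfl
  have hdeg : m.1 + m.2.1 + m.2.2 = n := (Finset.mem_filter.mp hm).2
  have hrm : r m =O[𝓝 z₀] fun _ => (1 : ℝ) :=
    ((hr m).continuousOn.continuousAt (hV.mem_nhds hz₀)).tendsto.isBigO_one ℝ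
  have := ((((isBigO_coord_of_eq_zero h₁).pow m.1).mul
    ((isBigO_coord_of_eq_zero h₂).pow m.2.1)).mul
    ((isBigO_coord_of_eq_zero h₃).pow m.2.2)).mul hrm
  simpa [← pow_add, hdeg] using this

def d0Entry (i j : Fin 2) : (Fin 4 → ℝ) →L[ℝ] ℂ :=
  LinearMap.toContinuousLinearMap
    { toFun := fun z => d0 z i j
      map_add' := fun z w => by fin_cases i <;> fin_cases j <;> simp [d0] <;> ring
      map_smul' := fun c z => by fin_cases i <;> fin_cases j <;> simp [d0] <;> ring }

theorem d0Entry_apply (i j : Fin 2) (v : Fin 4 → ℝ) : d0Entry i j v = d0 v i j := rfl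

theorem d0_single (m : Fin 4) : d0 (Pi.single m 1) = ![0, pauli1, pauli3, pauli2] m := by
  ext i j; fin_cases m <;> fin_cases i <;> fin_cases j <;> simp [d0, pauli1, pauli2, pauli3]

theorem d0_eq_zero {z : Fin 4 → ℝ} (h₁ : z 1 = 0) (h₂ : z 2 = 0) (h₃ : z 3 = 0) : d0 z = 0 := by
  ext i j; fin_cases i <;> fin_cases j <;> simp [d0, h₁, h₂, h₃]

theorem partialDerivs_eq_pauliCoeffs {p₁ p₂ p₃ : (Fin 4 → ℝ) → ℝ} {z₀ : Fin 4 → ℝ}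
    {D : Matrix (Fin 2) (Fin 2) ((Fin 4 → ℝ) →L[ℝ] ℂ)}
    (hD : ∀ a b, HasFDerivAt (fun z => diracSymbol p₁ p₂ p₃ z a b) (D a b) z₀) (m : Fin 4) :
    partialDerivs p₁ p₂ p₃ z₀ m = pauliCoeffs (Matrix.of fun a b => D a b (Pi.single m 1)) := by
  have hQ (z : Fin 4 → ℝ) := congr_fun (pauliCoeffs_diracSymbol p₁ p₂ p₃ z)
  have h₁ : HasFDerivAt p₁ (reCLM.comp (D 1 0)) z₀ :=
    (reCLM.hasFDerivAt.comp z₀ (hD 1 0)).congr_of_eventuallyEq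
      (Eventually.of_forall fun z => (hQ z 0).symm)
  have h₂ : HasFDerivAt p₂ (imCLM.comp (D 1 0)) z₀ :=
    (imCLM.hasFDerivAt.comp z₀ (hD 1 0)).congr_of_eventuallyEq
      (Eventually.of_forall fun z => (hQ z 1).symm)
  have h₃ : HasFDerivAt p₃ (reCLM.comp (D 0 0)) z₀ :=
    (reCLM.hasFDerivAt.comp z₀ (hD 0 0)).congr_of_eventuallyEq
      (Eventually.of_forall fun z => (hQ z 2).symm)
  ext k; fin_cases k <;> simp [partialDerivs, pauliCoeffs, h₁.fderiv, h₂.fderiv, h₃.fderiv]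

theorem jet_comp_of_normalForm {p₁ p₂ p₃ : (Fin 4 → ℝ) → ℝ} {κ : (Fin 4 → ℝ) → (Fin 4 → ℝ)}
    {U : (Fin 4 → ℝ) → Matrix (Fin 2) (Fin 2) ℂ} {c : (Fin 4 → ℝ) → ℝ}
    {V : Set (Fin 4 → ℝ)} (hV : IsOpen V) {z₀ : Fin 4 → ℝ} (hz₀ : z₀ ∈ V)
    (h₁ : z₀ 1 = 0) (h₂ : z₀ 2 = 0) (h₃ : z₀ 3 = 0)
    (hU : ∀ i j, DifferentiableAt ℝ (fun z => U z i j) z₀) (hUU : ∀ z, (U z)ᴴ * U z = 1)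
    (hc : DifferentiableAt ℝ c z₀)
    (hnf : ∀ i j, IsBigOC 3 V fun z =>
      (U z * diracSymbol p₁ p₂ p₃ (κ z) * (U z)ᴴ) i j - (c z : ℂ) * d0 z i j) :
    diracSymbol p₁ p₂ p₃ (κ z₀) = 0 ∧ ∀ m, partialDerivs (p₁ ∘ κ) (p₂ ∘ κ) (p₃ ∘ κ) z₀ m =
      c z₀ • pauliCoeffs ((U z₀)ᴴ * d0 (Pi.single m 1) * U z₀) := by
  set M := fun z => U z * diracSymbol p₁ p₂ p₃ (κ z) * (U z)ᴴ
  have hM (i j : Fin 2) := hasFDerivAt_of_sub_mul_isBigO (L := d0Entry i j)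
    (ofRealCLM.differentiableAt.comp z₀ hc) (by simp [d0Entry_apply, d0_eq_zero h₁ h₂ h₃])
    ((hnf i j).isBigO hV hz₀ h₁ h₂ h₃) (by norm_num)
  have hM₀ : M z₀ = 0 := by ext i j; exact (hM i j).1
  have hQ (z : Fin 4 → ℝ) : diracSymbol (p₁ ∘ κ) (p₂ ∘ κ) (p₃ ∘ κ) z = (U z)ᴴ * M z * U z := by
    simp only [M, ← mul_assoc, hUU, one_mul]
    rw [mul_assoc, hUU, mul_one]; rfl
  refine ⟨(hQ z₀).trans (by simp [hM₀]), fun m => ?_⟩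
  have hD (a b : Fin 2) : HasFDerivAt (fun z => diracSymbol (p₁ ∘ κ) (p₂ ∘ κ) (p₃ ∘ κ) z a b)
      (∑ i, ∑ j, (star (U z₀ i a) * U z₀ j b) • (c z₀ : ℂ) • d0Entry i j) z₀ := by
    simp_rw [hQ]
    exact hasFDerivAt_mul_mul_apply_of_eq_zero (A := fun z => (U z)ᴴ)
      (fun i j => (hU j i).star) (fun i j => (hM i j).2) hU hM₀ a b
  rw [partialDerivs_eq_pauliCoeffs hD, ← pauliCoeffs_ofReal_smul]
  congr 1
  ext a b
  simp [Matrix.mul_apply, d0Entry_apply]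
  ring

theorem lamPartial_Vpartial_of_normalForm {p₁ p₂ p₃ : (Fin 4 → ℝ) → ℝ}
    {κ : (Fin 4 → ℝ) → (Fin 4 → ℝ)} {U : (Fin 4 → ℝ) → Matrix (Fin 2) (Fin 2) ℂ}
    {c : (Fin 4 → ℝ) → ℝ} {V : Set (Fin 4 → ℝ)} (hV : IsOpen V) {z₀ : Fin 4 → ℝ} (hz₀ : z₀ ∈ V)
    (h₁ : z₀ 1 = 0) (h₂ : z₀ 2 = 0) (h₃ : z₀ 3 = 0)
    (hκ : DifferentiableAt ℝ κ z₀)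
    (hsymp : ∀ u v, omega4 (fderiv ℝ κ z₀ u) (fderiv ℝ κ z₀ v) = omega4 u v)
    (hp₁ : DifferentiableAt ℝ p₁ (κ z₀)) (hp₂ : DifferentiableAt ℝ p₂ (κ z₀))
    (hp₃ : DifferentiableAt ℝ p₃ (κ z₀))
    (hU : ∀ i j, DifferentiableAt ℝ (fun z => U z i j) z₀) (hSU : ∀ z, MemSU2 (U z))
    (hc : DifferentiableAt ℝ c z₀) (hc₀ : 0 < c z₀)
    (hnf : ∀ i j, IsBigOC 3 V fun z =>
      (U z * diracSymbol p₁ p₂ p₃ (κ z) * (U z)ᴴ) i j - (c z : ℂ) * d0 z i j) :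
    κ z₀ ∈ Gam p₁ p₂ p₃ ∧ lamPartial p₁ p₂ p₃ (κ z₀) = c z₀ ∧
      Vpartial p₁ p₂ p₃ (κ z₀) = fderiv ℝ κ z₀ ![c z₀, 0, 0, 0] := by
  obtain ⟨hΓ, hjet⟩ := jet_comp_of_normalForm hV hz₀ h₁ h₂ h₃ hU (fun z => (hSU z).1) hc hnf
  obtain ⟨hlam, hVq⟩ := lamPartial_Vpartial_of_partialDerivs (p₁ ∘ κ) (p₂ ∘ κ) (p₃ ∘ κ) z₀ hc₀
    (hSU z₀).pauliCoeffs_conj_cross (hSU z₀).pauliCoeffs_conj_dotProduct_self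
    (by simp [hjet, d0_single, pauliCoeffs]) (by simp [hjet, d0_single])
    (by simp [hjet, d0_single]) (by simp [hjet, d0_single])
  refine ⟨mem_Gam_of_diracSymbol_eq_zero hΓ, ?_, ?_⟩
  · rw [← lamPartial_comp hκ hsymp hp₁ hp₂ hp₃, hlam]
  · rw [← Vpartial_comp hκ hsymp hp₁ hp₂ hp₃, hVq]

theorem lambda_and_V_from_normal_form_general
    (p₁ p₂ p₃ : (Fin 4 → ℝ) → ℝ)
    (hp₁ : ContDiff ℝ (⊤ : ℕ∞) p₁) (hp₂ : ContDiff ℝ (⊤ : ℕ∞) p₂)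
    (hp₃ : ContDiff ℝ (⊤ : ℕ∞) p₃)
    (W : Set (Fin 4 → ℝ)) (hW : IsOpen W) (h0W : (0 : Fin 4 → ℝ) ∈ W)
    (κ : (Fin 4 → ℝ) → (Fin 4 → ℝ))
    (hκsm : ContDiffOn ℝ (⊤ : ℕ∞) κ W)
    (hκsymp : ∀ z ∈ W, ∀ u v : Fin 4 → ℝ,
      omega4 (fderiv ℝ κ z u) (fderiv ℝ κ z v) = omega4 u v)
    (lam mu : ℝ → ℝ) (hlam : ContDiff ℝ (⊤ : ℕ∞) lam) (hlampos : ∀ x, 0 < lam x)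
    (hmu : ContDiff ℝ (⊤ : ℕ∞) mu)
    (U : (Fin 4 → ℝ) → Matrix (Fin 2) (Fin 2) ℂ)
    (hUsm : ∀ i j, ContDiff ℝ (⊤ : ℕ∞) (fun z => U z i j))
    (hUSU2 : ∀ z, MemSU2 (U z))
    (hnf : ∃ V : Set (Fin 4 → ℝ), IsOpen V ∧ (0 : Fin 4 → ℝ) ∈ V ∧
      ∀ i j : Fin 2, IsBigOC 3 V (fun z =>
        (U z * diracSymbol p₁ p₂ p₃ (κ z) * (U z)ᴴ) i j -
          ((lam (z 0) + mu (z 0) * z 2 : ℝ) : ℂ) * d0 z i j)) :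
    ∃ δ > (0 : ℝ), ∀ x₁ : ℝ, |x₁| < δ →
      (![x₁, 0, 0, 0] : Fin 4 → ℝ) ∈ W ∧
      κ ![x₁, 0, 0, 0] ∈ Gam p₁ p₂ p₃ ∧
      lamPartial p₁ p₂ p₃ (κ ![x₁, 0, 0, 0]) = lam x₁ ∧
      Vpartial p₁ p₂ p₃ (κ ![x₁, 0, 0, 0]) =
        fderiv ℝ κ ![x₁, 0, 0, 0] ![lam x₁, 0, 0, 0] := by
  obtain ⟨V, hV, h0V, hnfV⟩ := hnf
  have haxis : Continuous fun x : ℝ => (![x, 0, 0, 0] : Fin 4 → ℝ) := by fun_prop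
  have h0 : ![(0 : ℝ), 0, 0, 0] ∈ W ∩ V := by
    rw [show ![(0 : ℝ), 0, 0, 0] = 0 by ext i; fin_cases i <;> rfl]
    exact ⟨h0W, h0V⟩
  obtain ⟨δ, hδ, hball⟩ := Metric.isOpen_iff.mp ((hW.inter hV).preimage haxis) 0 h0
  refine ⟨δ, hδ, fun x₁ hx₁ => ?_⟩
  obtain ⟨hx₁W, hx₁V⟩ : ![x₁, 0, 0, 0] ∈ W ∩ V := hball (by simpa using hx₁)
  have hlamd := hlam.differentiable (by simp)
  have hmud := hmu.differentiable (by simp)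
  have hsmooth {f : (Fin 4 → ℝ) → ℝ} (hf : ContDiff ℝ (⊤ : ℕ∞) f) (z) : DifferentiableAt ℝ f z :=
    (hf.differentiable (by simp)).differentiableAt
  have key := lamPartial_Vpartial_of_normalForm (c := fun z => lam (z 0) + mu (z 0) * z 2)
    hV hx₁V rfl rfl rfl ((hκsm.contDiffAt (hW.mem_nhds hx₁W)).differentiableAt (by simp))
    (hκsymp _ hx₁W) (hsmooth hp₁ _) (hsmooth hp₂ _) (hsmooth hp₃ _)
    (fun i j => ((hUsm i j).differentiable (by simp)).differentiableAt) hUSU2 (by fun_prop)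
    (by simpa using hlampos x₁) hnfV
  simp only [Matrix.cons_val_zero, Matrix.cons_val, mul_zero, add_zero] at key
  exact ⟨hx₁W, key⟩

/-- Lemma B.8: `λ_∂` and `V_∂` along `Γ` from the normal form. -/
theorem lambda_and_V_from_normal_form
    (p₁ p₂ p₃ : (Fin 4 → ℝ) → ℝ)
    (hp₁ : ContDiff ℝ (⊤ : ℕ∞) p₁) (hp₂ : ContDiff ℝ (⊤ : ℕ∞) p₂)
    (hp₃ : ContDiff ℝ (⊤ : ℕ∞) p₃)
    (hA1 : A1 p₁ p₂ p₃) (hA2 : A2 p₁ p₂ p₃)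
    (W : Set (Fin 4 → ℝ)) (hW : IsOpen W) (h0W : (0 : Fin 4 → ℝ) ∈ W)
    (κ : (Fin 4 → ℝ) → (Fin 4 → ℝ))
    (hκsm : ContDiffOn ℝ (⊤ : ℕ∞) κ W) (hκinj : Set.InjOn κ W)
    (hκopen : IsOpen (κ '' W))
    (hκsymp : ∀ z ∈ W, ∀ u v : Fin 4 → ℝ,
      omega4 (fderiv ℝ κ z u) (fderiv ℝ κ z v) = omega4 u v)
    (hκ0 : κ 0 ∈ Gam p₁ p₂ p₃)
    (lam mu : ℝ → ℝ) (hlam : ContDiff ℝ (⊤ : ℕ∞) lam) (hlampos : ∀ x, 0 < lam x)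
    (hmu : ContDiff ℝ (⊤ : ℕ∞) mu)
    (U : (Fin 4 → ℝ) → Matrix (Fin 2) (Fin 2) ℂ)
    (hUsm : ∀ i j, ContDiff ℝ (⊤ : ℕ∞) (fun z => U z i j))
    (hUSU2 : ∀ z, MemSU2 (U z))
    (hnf : ∃ V : Set (Fin 4 → ℝ), IsOpen V ∧ (0 : Fin 4 → ℝ) ∈ V ∧
      ∀ i j : Fin 2, IsBigOC 3 V (fun z =>
        (U z * diracSymbol p₁ p₂ p₃ (κ z) * (U z)ᴴ) i j -
          ((lam (z 0) + mu (z 0) * z 2 : ℝ) : ℂ) * d0 z i j)) :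
    ∃ δ > (0 : ℝ), ∀ x₁ : ℝ, |x₁| < δ →
      (![x₁, 0, 0, 0] : Fin 4 → ℝ) ∈ W ∧
      κ ![x₁, 0, 0, 0] ∈ Gam p₁ p₂ p₃ ∧
      lamPartial p₁ p₂ p₃ (κ ![x₁, 0, 0, 0]) = lam x₁ ∧
      Vpartial p₁ p₂ p₃ (κ ![x₁, 0, 0, 0]) =
        fderiv ℝ κ ![x₁, 0, 0, 0] ![lam x₁, 0, 0, 0] :=
  lambda_and_V_from_normal_form_general p₁ p₂ p₃ hp₁ hp₂ hp₃ W hW h0W κ hκsm hκsymp lam mu hlam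
    hlampos hmu U hUsm hUSU2 hnf
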